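/- For α ∈ [1/2, 1], the map Φ⁻(x,y) = (1/(x−y), (1−x)(1−y)/(x−y)) maps Ω_α^− injectively onto Λ_α^−, and its inverse is H⁻(w,z) = ((2w + 1 − √(1 + 4wz))/(2w), (2w − 1 − √(1 + 4wz))/(2w)), i.e. for every (w,z) ∈ Λ_α^−, H⁻(w,z) ∈ Ω_α^− and Φ⁻(H⁻(w,z)) = (w,z). -/

import Mathlib

open Real MeasureTheory Filter Set
open scoped Classical

noncomputable section

/-- The Gauss map `T x = 1/x - ⌊1/x⌋`. -/
def gaussMap (x : ℝ) : ℝ := 1/x - ⌊1/x⌋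

/-- The natural extension `𝐓(x,y) = (1/x - ⌊1/x⌋, 1/y - ⌊1/x⌋)`. -/
def natExt (p : ℝ × ℝ) : ℝ × ℝ := (1/p.1 - ⌊1/p.1⌋, 1/p.2 - ⌊1/p.1⌋)

/-- `(x₀, y₀) = 𝐓(x, ∞) = (1/x - ⌊1/x⌋, -⌊1/x⌋)`. -/
def initPt (x : ℝ) : ℝ × ℝ := (1/x - ⌊1/x⌋, -(⌊1/x⌋ : ℝ))

/-- Partial quotient `a_n = ⌊1 / T^{n-1} x⌋` (indexed from 1). -/
def cfA (x : ℝ) (n : ℕ) : ℤ := ⌊1 / (gaussMap^[n-1] x)⌋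

/-- The pair `(p_n, q_n)` of numerator and denominator of the `n`-th convergent. -/
def pq (x : ℝ) : ℕ → ℤ × ℤ
  | 0 => (0, 1)
  | 1 => (1, ⌊1/x⌋)
  | n+2 => (cfA x (n+2) * (pq x (n+1)).1 + (pq x n).1,
            cfA x (n+2) * (pq x (n+1)).2 + (pq x n).2)

def pconv (x : ℝ) (n : ℕ) : ℤ := (pq x n).1
def qconv (x : ℝ) (n : ℕ) : ℤ := (pq x n).2

/-- `θ_n(x) = q_n |q_n x - p_n|`. -/
def theta (x : ℝ) (n : ℕ) : ℝ := (qconv x n : ℝ) * |(qconv x n : ℝ) * x - (pconv x n : ℝ)|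

/-- `Ω = (0,1) × (-∞,-1)`. -/
def Ωset : Set (ℝ × ℝ) := Set.Ioo (0:ℝ) 1 ×ˢ Set.Iio (-1 : ℝ)

/-- `Ω_α = {(x,y) ∈ Ω : 1/(x-y) < α}`. -/
def Ωα (α : ℝ) : Set (ℝ × ℝ) := {p ∈ Ωset | 1 / (p.1 - p.2) < α}

/-- First return time to `Ω_α` (defined as `sInf`, so `0` when undefined). -/
def tauα (α : ℝ) (p : ℝ × ℝ) : ℕ := sInf {n : ℕ | 1 ≤ n ∧ natExt^[n] p ∈ Ωα α}

/-- First return map `𝐓_α`. -/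
def retMap (α : ℝ) (p : ℝ × ℝ) : ℝ × ℝ := natExt^[tauα α p] p

/-- The invariant measure `μ` with density `(log 2)⁻¹ (x-y)⁻²` on `Ω`. -/
def μnat : Measure (ℝ × ℝ) :=
  (volume.restrict Ωset).withDensity
    (fun p => ENNReal.ofReal ((Real.log 2)⁻¹ * ((p.1 - p.2)⁻¹)^2))

/-- `c_α = (log 2 · μ(Ω_α))⁻¹`, explicitly. -/
def cα (α : ℝ) : ℝ := if 1/2 < α then (1 - α + Real.log 2 + Real.log α)⁻¹ else α⁻¹

/-- The probability measure `μ_α` with density `c_α (x-y)⁻²` on `Ω_α`. -/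
def μmeas (α : ℝ) : Measure (ℝ × ℝ) :=
  (volume.restrict (Ωα α)).withDensity
    (fun p => ENNReal.ofReal (cα α * ((p.1 - p.2)⁻¹)^2))

/-- `Ω_α⁻ = {(x,y) ∈ Ω : α < x, y < αx/(α-x)}`. -/
def Ωminus (α : ℝ) : Set (ℝ × ℝ) := {p ∈ Ωset | α < p.1 ∧ p.2 < α * p.1 / (α - p.1)}

/-- `Φ⁻(x,y) = (1/(x-y), (1-x)(1-y)/(x-y))`. -/
def Φminus (p : ℝ × ℝ) : ℝ × ℝ := (1/(p.1 - p.2), (1 - p.1) * (1 - p.2) / (p.1 - p.2))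

/-- `Λ_α = {(w,z) : 0 < w < α, 0 < z < α, w + z < 1}`. -/
def Λα (α : ℝ) : Set (ℝ × ℝ) :=
  {p | 0 < p.1 ∧ p.1 < α ∧ 0 < p.2 ∧ p.2 < α ∧ p.1 + p.2 < 1}

/-- `Λ_α⁻ = {(w,z) ∈ Λ_α : z < w - α + √(1-4αw)}`. -/
def Λαminus (α : ℝ) : Set (ℝ × ℝ) :=
  {p ∈ Λα α | p.2 < p.1 - α + Real.sqrt (1 - 4*α*p.1)}

/-- `H⁻(w,z) = ((2w+1-√(1+4wz))/(2w), (2w-1-√(1+4wz))/(2w))`. -/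
def Hminus (p : ℝ × ℝ) : ℝ × ℝ :=
  ((2*p.1 + 1 - Real.sqrt (1 + 4*p.1*p.2)) / (2*p.1),
   (2*p.1 - 1 - Real.sqrt (1 + 4*p.1*p.2)) / (2*p.1))

/-!
Put `d = x - y` and `t = -(x + y) / d`. For `(w, z) = Φ⁻(x, y)` one has `√(1 + 4wz) = 2w + t`
and `t² = 1 - 4αw + 4(xy + αd)/d²`, so the curved boundary `y = αx/(α - x)` of `Ω_α⁻`, i.e.
`xy + α(x - y) = 0`, is carried to `t = √(1 - 4αw)`, i.e. to `z = w - α + √(1 - 4αw)`; solving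
`1 + 4wz = (2w + t)²` for `t` gives `H⁻`. For `α ≥ 1/2` the remaining inequalities defining
`Λ_α` follow from this one together with `w, z > 0` and `4αw < 1`.
-/

lemma sqrt_one_add_four_mul_Φminus {x y : ℝ} (hxy : y < x) (h2 : x + y ≤ 2) :
    √(1 + 4 * (Φminus (x, y)).1 * (Φminus (x, y)).2) = (2 - x - y) / (x - y) := by
  have hd : 0 < x - y := sub_pos.2 hxy
  have hsq : 1 + 4 * (Φminus (x, y)).1 * (Φminus (x, y)).2 = ((2 - x - y) / (x - y)) ^ 2 := by
    simp only [Φminus]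
    field_simp
    ring
  rw [hsq, Real.sqrt_sq (div_nonneg (by linarith) hd.le)]

lemma Hminus_Φminus {x y : ℝ} (hxy : y < x) (h2 : x + y ≤ 2) :
    Hminus (Φminus (x, y)) = (x, y) := by
  have hd : x - y ≠ 0 := (sub_pos.2 hxy).ne'
  rw [Hminus, sqrt_one_add_four_mul_Φminus hxy h2]
  simp only [Φminus, Prod.mk.injEq]
  constructor <;> field_simp <;> ring

lemma Φminus_Hminus {w z : ℝ} (hw : w ≠ 0) (hwz : 0 ≤ 1 + 4 * w * z) :
    Φminus (Hminus (w, z)) = (w, z) := by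
  have hs := Real.sq_sqrt hwz
  simp only [Φminus, Hminus, Prod.mk.injEq]
  set s := √(1 + 4 * w * z)
  constructor
  · field_simp
    ring
  · field_simp
    linear_combination hs

lemma mem_Ωminus_iff {α x y : ℝ} :
    (x, y) ∈ Ωminus α ↔ ((0 < x ∧ x < 1) ∧ y < -1) ∧ α < x ∧ x * y + α * (x - y) < 0 := by
  simp only [Ωminus, Ωset, mem_prod, mem_Ioo, mem_Iio]
  refine and_congr_right fun _ => and_congr_right fun hαx => ?_
  rw [lt_div_iff_of_neg (sub_neg.2 hαx)]
  constructor <;> intro h <;> linarith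

lemma mem_Λαminus_iff {α w z : ℝ} (hα : 1 / 2 ≤ α) :
    (w, z) ∈ Λαminus α ↔ 0 < w ∧ 0 < z ∧ 4 * α * w < 1 ∧ z < w - α + √(1 - 4 * α * w) := by
  simp only [Λαminus, Λα]
  constructor
  · rintro ⟨⟨hw, hwα, hz, -, -⟩, h⟩
    refine ⟨hw, hz, ?_, h⟩
    by_contra! h4
    rw [Real.sqrt_eq_zero_of_nonpos (by linarith)] at h
    linarith
  · rintro ⟨hw, hz, h4, h⟩
    have hw2 : w < 1 / 2 := by nlinarith
    have hs1 : √(1 - 4 * α * w) < 1 - w := (Real.sqrt_lt' (by linarith)).2 (by nlinarith)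
    have hs2 : √(1 - 4 * α * w) ≤ 1 + α - 2 * w := (Real.sqrt_le_left (by linarith)).2 (by nlinarith)
    exact ⟨⟨hw, by nlinarith, hz, by linarith, by linarith⟩, h⟩

lemma mapsTo_Φminus {α : ℝ} (hα : 1 / 2 ≤ α) : MapsTo Φminus (Ωminus α) (Λαminus α) := by
  rintro ⟨x, y⟩ hp
  obtain ⟨⟨⟨hx0, hx1⟩, hy⟩, hαx, hC⟩ := mem_Ωminus_iff.1 hp
  have hd : 0 < x - y := by linarith
  have ht : 0 < -(x + y) / (x - y) := div_pos (by linarith) hd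
  have hgap : 1 - 4 * α * (1 / (x - y)) - (-(x + y) / (x - y)) ^ 2
      = -4 * (x * y + α * (x - y)) / (x - y) ^ 2 := by
    field_simp
    ring
  have hgap_pos : 0 < -4 * (x * y + α * (x - y)) / (x - y) ^ 2 := div_pos (by linarith) (by positivity)
  have hz : (1 - x) * (1 - y) / (x - y)
      = 1 / (x - y) - α + -(x + y) / (x - y) + (x * y + α * (x - y)) / (x - y) := by
    field_simp
    ring
  have hts : -(x + y) / (x - y) < √(1 - 4 * α * (1 / (x - y))) :=
    (Real.lt_sqrt ht.le).2 (by linarith)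
  refine (mem_Λαminus_iff hα).2 ⟨div_pos one_pos hd, div_pos (by nlinarith) hd, by nlinarith, ?_⟩
  show (1 - x) * (1 - y) / (x - y) < 1 / (x - y) - α + √(1 - 4 * α * (1 / (x - y)))
  rw [hz]
  linarith [div_neg_of_neg_of_pos hC hd]

lemma mapsTo_Hminus {α : ℝ} (hα : 1 / 2 ≤ α) : MapsTo Hminus (Λαminus α) (Ωminus α) := by
  rintro ⟨w, z⟩ hp
  obtain ⟨hw, hz, h4, hcond⟩ := (mem_Λαminus_iff hα).1 hp
  set s₀ := √(1 - 4 * α * w)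
  set s := √(1 + 4 * w * z)
  have hs₀sq : s₀ ^ 2 = 1 - 4 * α * w := Real.sq_sqrt (by linarith)
  have hs₀pos : 0 < s₀ := Real.sqrt_pos.2 (by linarith)
  have hssq : s ^ 2 = 1 + 4 * w * z := Real.sq_sqrt (by positivity)
  have hw2 : w < 1 / 2 := by nlinarith
  have hs1 : 1 < s := (Real.lt_sqrt zero_le_one).2 (by nlinarith)
  have hslt : s < 2 * w + s₀ := (Real.sqrt_lt' (by linarith)).2 (by nlinarith)
  have hs₀le : s₀ ≤ 1 - 2 * α * w := (Real.sqrt_le_left (by nlinarith)).2 (by nlinarith [sq_nonneg (2 * α * w)])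
  have h2w : 0 < 2 * w := by linarith
  have hC : (2 * w + 1 - s) / (2 * w) * ((2 * w - 1 - s) / (2 * w))
      + α * ((2 * w + 1 - s) / (2 * w) - (2 * w - 1 - s) / (2 * w))
      = ((s - 2 * w) ^ 2 - s₀ ^ 2) / (4 * w ^ 2) := by
    rw [hs₀sq]
    field_simp
    ring
  have hαX : α < (2 * w + 1 - s) / (2 * w) := by
    rw [lt_div_iff₀ h2w]
    nlinarith
  refine mem_Ωminus_iff.2 ⟨⟨⟨by linarith, ?_⟩, ?_⟩, hαX, ?_⟩
  · rw [div_lt_one h2w]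
    linarith
  · rw [div_lt_iff₀ h2w]
    linarith
  · rw [hC]
    exact div_neg_of_neg_of_pos (by nlinarith) (by positivity)

/-- for `α ∈ [1/2,1]`, `Φ⁻` maps `Ω_α⁻` bijectively onto `Λ_α⁻`, with
inverse `H⁻`. -/
theorem stmt_14 (α : ℝ) (hα : α ∈ Set.Icc (1/2:ℝ) 1) :
    Set.BijOn Φminus (Ωminus α) (Λαminus α) ∧
    ∀ p ∈ Λαminus α, Hminus p ∈ Ωminus α ∧ Φminus (Hminus p) = p := by
  have hinv : InvOn Hminus Φminus (Ωminus α) (Λαminus α) := by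
    constructor
    · rintro ⟨x, y⟩ hp
      obtain ⟨⟨⟨hx0, hx1⟩, hy⟩, -, -⟩ := mem_Ωminus_iff.1 hp
      exact Hminus_Φminus (by linarith) (by linarith)
    · rintro ⟨w, z⟩ hp
      obtain ⟨hw, hz, -, -⟩ := (mem_Λαminus_iff hα.1).1 hp
      exact Φminus_Hminus hw.ne' (by positivity)
  exact ⟨hinv.bijOn (mapsTo_Φminus hα.1) (mapsTo_Hminus hα.1),
    fun p hp => ⟨mapsTo_Hminus hα.1 hp, hinv.2 hp⟩⟩
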